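/- arXiv:1410.4183 — 6 statements merged into one kernel-verified Lean document; each statement's English description precedes it below -/
import Mathlib

section
/- Let λ, μ, ν > 0 with σ := λ + νμ ≠ 0, and η ∈ ℝ. Then V(t) = (η/σ)·(λ + νμ·exp(λσt)) satisfies the Volterra integral equation V(t) = η + νλμ·∫₀ᵗ exp(λ²(t−τ))·V(τ)dτ for all t ≥ 0. -/
open Real intervalIntegral

lemma mul_integral_exp_mul (c t : ℝ) : c * ∫ τ in (0:ℝ)..t, exp (c * τ) = exp (c * t) - 1 := by
  rw [mul_integral_comp_mul_left, integral_exp, mul_zero, exp_zero]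

/- The convolution of `exp (a ·)` with `exp (b ·)` is `(exp (b t) - exp (a t)) / (b - a)`; stated
multiplied out it also holds for `a = b`. -/
lemma sub_mul_integral_exp_mul_sub_mul_exp (a b t : ℝ) :
    (b - a) * ∫ τ in (0:ℝ)..t, exp (a * (t - τ)) * exp (b * τ) = exp (b * t) - exp (a * t) := by
  have hfactor (τ : ℝ) : exp (a * (t - τ)) * exp (b * τ) = exp (a * t) * exp ((b - a) * τ) := by
    rw [← exp_add, ← exp_add]; ring_nf
  simp_rw [hfactor, integral_const_mul]
  calc (b - a) * (exp (a * t) * ∫ τ in (0:ℝ)..t, exp ((b - a) * τ))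
      = exp (a * t) * ((b - a) * ∫ τ in (0:ℝ)..t, exp ((b - a) * τ)) := by ring
    _ = exp (a * t) * (exp ((b - a) * t) - 1) := by rw [mul_integral_exp_mul]
    _ = exp (b * t) - exp (a * t) := by rw [mul_sub, ← exp_add]; ring_nf

theorem stmt12_general (lam μ ν η : ℝ)
    (σ : ℝ) (hσdef : σ = lam + ν * μ) (hσ : σ ≠ 0)
    (V : ℝ → ℝ)
    (hV : ∀ t : ℝ, V t = η / σ * (lam + ν * μ * Real.exp (lam * σ * t))) :
    ∀ t : ℝ, 0 ≤ t →
      V t = η + ν * lam * μ * ∫ τ in (0:ℝ)..t, Real.exp (lam ^ 2 * (t - τ)) * V τ := by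
  intro t _
  have hconst := sub_mul_integral_exp_mul_sub_mul_exp (lam ^ 2) 0 t
  simp only [zero_mul, exp_zero, mul_one] at hconst
  have hexp := sub_mul_integral_exp_mul_sub_mul_exp (lam ^ 2) (lam * σ) t
  have hsplit : ∫ τ in (0:ℝ)..t, exp (lam ^ 2 * (t - τ)) * V τ
      = η / σ * (lam * (∫ τ in (0:ℝ)..t, exp (lam ^ 2 * (t - τ)))
        + ν * μ * ∫ τ in (0:ℝ)..t, exp (lam ^ 2 * (t - τ)) * exp (lam * σ * τ)) := by
    have hpoint (τ : ℝ) : exp (lam ^ 2 * (t - τ)) * V τ = η / σ * (lam * exp (lam ^ 2 * (t - τ))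
        + ν * μ * (exp (lam ^ 2 * (t - τ)) * exp (lam * σ * τ))) := by
      rw [hV]; ring
    simp_rw [hpoint, integral_const_mul]
    rw [integral_add (Continuous.intervalIntegrable (by fun_prop) _ _)
      (Continuous.intervalIntegrable (by fun_prop) _ _), integral_const_mul, integral_const_mul]
  have hη : η = η / σ * (lam + ν * μ) := by rw [← hσdef]; field_simp
  rw [hV t, hsplit]
  subst hσdef
  linear_combination (-1) * hη + η / (lam + ν * μ) * ν * μ * hconst - η / (lam + ν * μ) * ν * μ * hexp

theorem stmt12 (lam μ ν η : ℝ) (hlam : 0 < lam) (hμ : 0 < μ) (hν : 0 < ν)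
    (σ : ℝ) (hσdef : σ = lam + ν * μ) (hσ : σ ≠ 0)
    (V : ℝ → ℝ)
    (hV : ∀ t : ℝ, V t = η / σ * (lam + ν * μ * Real.exp (lam * σ * t))) :
    ∀ t : ℝ, 0 ≤ t →
      V t = η + ν * lam * μ * ∫ τ in (0:ℝ)..t, Real.exp (lam ^ 2 * (t - τ)) * V τ :=
  stmt12_general lam μ ν η σ hσdef hσ V hV
end

section
/- If δ := λ − νμ = 0 with λ, μ, ν > 0 and η ∈ ℝ, then V(t) = η·(1 + λ²t) satisfies V(t) = η + νλμ·∫₀ᵗ exp(−λ²(t−τ))·V(τ)dτ for all t ≥ 0. -/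
theorem stmt13 (lam μ ν η : ℝ) (hlam : 0 < lam) (hμ : 0 < μ) (hν : 0 < ν)
    (hδ : lam - ν * μ = 0)
    (V : ℝ → ℝ) (hV : ∀ t : ℝ, V t = η * (1 + lam ^ 2 * t)) :
    ∀ t : ℝ, 0 ≤ t →
      V t = η + ν * lam * μ * ∫ τ in (0:ℝ)..t, Real.exp (-lam ^ 2 * (t - τ)) * V τ := by
  intro t ht
  have hνμ : ν * μ = lam := by linarith
  have key : (∫ τ in (0:ℝ)..t, Real.exp (-lam ^ 2 * (t - τ)) * V τ) = η * t := by
    have hderiv : ∀ τ ∈ Set.uIcc (0:ℝ) t,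
        HasDerivAt (fun τ : ℝ => η * τ * Real.exp (lam ^ 2 * (τ - t)))
          (Real.exp (-lam ^ 2 * (t - τ)) * V τ) τ := by
      intro τ _
      have h1 : HasDerivAt (fun τ : ℝ => η * τ) η τ := by
        simpa using (hasDerivAt_id τ).const_mul η
      have h2 : HasDerivAt (fun τ : ℝ => Real.exp (lam ^ 2 * (τ - t)))
          (Real.exp (lam ^ 2 * (τ - t)) * lam ^ 2) τ := by
        have : HasDerivAt (fun τ : ℝ => lam ^ 2 * (τ - t)) (lam ^ 2) τ := by
          simpa using ((hasDerivAt_id τ).sub_const t).const_mul (lam ^ 2)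
        simpa using this.exp
      have : HasDerivAt (fun τ : ℝ => η * τ * Real.exp (lam ^ 2 * (τ - t))) _ τ := h1.mul h2
      convert this using 1
      rw [hV τ]
      have : -lam ^ 2 * (t - τ) = lam ^ 2 * (τ - t) := by ring
      rw [this]
      ring
    have hcont : IntervalIntegrable (fun τ => Real.exp (-lam ^ 2 * (t - τ)) * V τ)
        MeasureTheory.volume 0 t := by
      apply Continuous.intervalIntegrable
      have : Continuous V := by
        have : V = fun t => η * (1 + lam ^ 2 * t) := funext hV
        rw [this]; continuity
      continuity
    have := intervalIntegral.integral_eq_sub_of_hasDerivAt hderiv hcont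
    rw [this]
    simp
  rw [key, hV t]
  have : ν * lam * μ = lam ^ 2 := by
    rw [show ν * lam * μ = lam * (ν * μ) by ring, hνμ]; ring
  rw [this]; ring
end

section
/- Let λ, μ, ν > 0 with δ := λ − νμ ≠ 0 and η ∈ ℝ. Then V(t) = (η/δ)·(λ − νμ·exp(−λδt)) satisfies the Volterra integral equation V(t) = η + νλμ·∫₀ᵗ exp(−λ²(t−τ))·V(τ)dτ for all t ≥ 0. Moreover, if δ > 0 then lim_{t→∞} V(t) = ηλ/δ. -/
/-!
The profile `V` solves the linear initial value problem `V' = ν λ μ V - λ² (V - η)`,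
`V 0 = η`. Variation of constants turns any solution of such a problem into a solution of the
Volterra equation: the derivative of `exp (λ² τ) * (V τ - η)` is `ν λ μ * exp (λ² τ) * V τ`,
and integrating from `0` to `t` gives the equation. The limit is read off from `exp (-(λ δ) t) → 0`
when `λ δ > 0`.
-/

open Real Filter Topology

theorem hasDerivAt_exp_const_mul (k x : ℝ) :
    HasDerivAt (fun x => exp (k * x)) (exp (k * x) * k) x := by
  simpa using ((hasDerivAt_id x).const_mul k).exp

theorem volterra_of_hasDerivAt {a b η : ℝ} {V V' : ℝ → ℝ}
    (hV' : ∀ τ, HasDerivAt V (V' τ) τ) (hODE : ∀ τ, V' τ = b * V τ - a * (V τ - η))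
    (hV0 : V 0 = η) (t : ℝ) :
    V t = η + b * ∫ τ in (0:ℝ)..t, exp (-a * (t - τ)) * V τ := by
  have hV_cont : Continuous V := continuous_iff_continuousAt.2 fun τ => (hV' τ).continuousAt
  have hW : ∀ τ,
      HasDerivAt (fun τ => exp (a * τ) * (V τ - η)) (b * (exp (a * τ) * V τ)) τ := by
    intro τ
    refine ((hasDerivAt_exp_const_mul a τ).mul ((hV' τ).sub_const η)).congr_deriv ?_
    rw [hODE]
    ring
  have hW'_cont : Continuous fun τ => b * (exp (a * τ) * V τ) := by fun_prop
  have hFTC : b * ∫ τ in (0:ℝ)..t, exp (a * τ) * V τ = exp (a * t) * (V t - η) := by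
    rw [← intervalIntegral.integral_const_mul,
      intervalIntegral.integral_eq_sub_of_hasDerivAt (fun τ _ => hW τ)
        (hW'_cont.intervalIntegrable _ _)]
    simp [hV0]
  have hsplit : ∀ τ, exp (-a * (t - τ)) * V τ = exp (-a * t) * (exp (a * τ) * V τ) := by
    intro τ
    rw [← mul_assoc, ← exp_add]
    ring_nf
  simp_rw [hsplit, intervalIntegral.integral_const_mul]
  rw [mul_left_comm, hFTC, ← mul_assoc, ← exp_add]
  simp

theorem tendsto_mul_sub_mul_exp_atTop {k : ℝ} (hk : 0 < k) (c A B : ℝ) :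
    Tendsto (fun t => c * (A - B * exp (-k * t))) atTop (𝓝 (c * A)) := by
  have hexp : Tendsto (fun t => exp (-k * t)) atTop (𝓝 0) :=
    tendsto_exp_atBot.comp (tendsto_id.const_mul_atTop_of_neg (neg_neg_of_pos hk))
  simpa using ((hexp.const_mul B).const_sub A).const_mul c

theorem stmt14_general (lam μ ν η : ℝ) (hlam : 0 < lam)
    (δ : ℝ) (hδdef : δ = lam - ν * μ) (hδ : δ ≠ 0)
    (V : ℝ → ℝ)
    (hV : ∀ t : ℝ, V t = η / δ * (lam - ν * μ * Real.exp (-(lam * δ) * t))) :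
    (∀ t : ℝ, 0 ≤ t →
        V t = η + ν * lam * μ * ∫ τ in (0:ℝ)..t, Real.exp (-lam ^ 2 * (t - τ)) * V τ) ∧
    (0 < δ → Filter.Tendsto V Filter.atTop (nhds (η * lam / δ))) := by
  have hV0 : V 0 = η := by
    rw [hV, mul_zero, exp_zero, mul_one, ← hδdef, div_mul_cancel₀ η hδ]
  have hderiv : ∀ τ,
      HasDerivAt V (η / δ * (ν * μ * (lam * δ) * exp (-(lam * δ) * τ))) τ := by
    intro τ
    rw [show V = _ from funext hV]
    have hexp := hasDerivAt_exp_const_mul (-(lam * δ)) τ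
    exact (((hexp.const_mul (ν * μ)).const_sub lam).const_mul (η / δ)).congr_deriv (by ring)
  have hODE : ∀ τ, η / δ * (ν * μ * (lam * δ) * exp (-(lam * δ) * τ)) =
      ν * lam * μ * V τ - lam ^ 2 * (V τ - η) := by
    intro τ
    rw [hV]
    field_simp
    rw [hδdef]
    ring
  refine ⟨fun t _ => volterra_of_hasDerivAt hderiv hODE hV0 t, fun hδpos => ?_⟩
  rw [show V = _ from funext hV, mul_div_right_comm]
  exact tendsto_mul_sub_mul_exp_atTop (mul_pos hlam hδpos) _ _ _

theorem stmt14 (lam μ ν η : ℝ) (hlam : 0 < lam) (hμ : 0 < μ) (hν : 0 < ν)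
    (δ : ℝ) (hδdef : δ = lam - ν * μ) (hδ : δ ≠ 0)
    (V : ℝ → ℝ)
    (hV : ∀ t : ℝ, V t = η / δ * (lam - ν * μ * Real.exp (-(lam * δ) * t))) :
    (∀ t : ℝ, 0 ≤ t →
        V t = η + ν * lam * μ * ∫ τ in (0:ℝ)..t, Real.exp (-lam ^ 2 * (t - τ)) * V τ) ∧
    (0 < δ → Filter.Tendsto V Filter.atTop (nhds (η * lam / δ))) :=
  stmt14_general lam μ ν η hlam δ hδdef hδ V hV
end

section
/- For λ, μ > 0 and t > 0: (1/(2√π·t^{3/2}))·∫₀^∞ ξ·exp(−ξ²/(4t))·(−μ·sinh(λξ))dξ = −λμ·exp(λ²t). -/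
/-!
The integrand is even in `ξ`, so the half-line integral is half the integral over `ℝ`. Writing
`sinh` as a difference of exponentials leaves `∫ x exp(-a x² + c x) dx` with `a = 1/(4t)`;
completing the square and shifting `x ↦ x + c/(2a)` turns it into `exp(c²/(4a))` times
`∫ (x + c/(2a)) exp(-a x²) dx`, whose odd part vanishes and whose even part is the
Gaussian integral `√(π/a)`.
-/

open Real MeasureTheory Set

theorem integral_eq_zero_of_odd {f : ℝ → ℝ} (hf : Function.Odd f) : ∫ x, f x = 0 := by
  have h := integral_neg_eq_self f volume
  rw [show (fun x ↦ f (-x)) = fun x ↦ -f x from funext hf, integral_neg] at h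
  linarith

theorem integral_Ioi_eq_half_of_even {f : ℝ → ℝ} (hf : Function.Even f) :
    ∫ x in Ioi 0, f x = (∫ x, f x) / 2 := by
  have h : (fun x ↦ f |x|) = f := funext fun x ↦ by
    rcases abs_choice x with hx | hx <;> simp [hx, hf x]
  have := integral_comp_abs (f := f)
  rw [h] at this
  linarith

theorem mul_exp_neg_mul_sq_add_mul_comp_add {a : ℝ} (ha : 0 < a) (c y : ℝ) :
    (y + c / (2 * a)) * exp (-a * (y + c / (2 * a)) ^ 2 + c * (y + c / (2 * a)))
      = exp (c ^ 2 / (4 * a)) * ((y + c / (2 * a)) * exp (-a * y ^ 2)) := by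
  have : -a * (y + c / (2 * a)) ^ 2 + c * (y + c / (2 * a)) = c ^ 2 / (4 * a) + -a * y ^ 2 := by
    field_simp [ha.ne']
    ring
  rw [this, exp_add]
  ring

theorem integrable_mul_exp_neg_mul_sq_add_mul {a : ℝ} (ha : 0 < a) (c : ℝ) :
    Integrable fun x : ℝ ↦ x * exp (-a * x ^ 2 + c * x) := by
  have h : Integrable fun y : ℝ ↦
      exp (c ^ 2 / (4 * a)) * ((y + c / (2 * a)) * exp (-a * y ^ 2)) :=
    (((integrable_mul_exp_neg_mul_sq ha).add
      ((integrable_exp_neg_mul_sq ha).const_mul (c / (2 * a)))).congr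
      (.of_forall fun y ↦ by simp only [Pi.add_apply]; ring)).const_mul _
  convert h.comp_sub_right (c / (2 * a)) using 2 with x
  rw [← mul_exp_neg_mul_sq_add_mul_comp_add ha, sub_add_cancel]

theorem integral_mul_exp_neg_mul_sq_add_mul {a : ℝ} (ha : 0 < a) (c : ℝ) :
    ∫ x : ℝ, x * exp (-a * x ^ 2 + c * x)
      = c / (2 * a) * √(π / a) * exp (c ^ 2 / (4 * a)) := by
  have h_odd : ∫ y : ℝ, y * exp (-a * y ^ 2) = 0 :=
    integral_eq_zero_of_odd fun y ↦ by simp only [neg_sq, neg_mul]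
  rw [← integral_add_right_eq_self _ (c / (2 * a))]
  simp_rw [mul_exp_neg_mul_sq_add_mul_comp_add ha, add_mul]
  rw [integral_const_mul, integral_add (integrable_mul_exp_neg_mul_sq ha)
    ((integrable_exp_neg_mul_sq ha).const_mul _), integral_const_mul, h_odd, integral_gaussian]
  ring

theorem integral_mul_exp_neg_mul_sq_mul_sinh {a : ℝ} (ha : 0 < a) (c : ℝ) :
    ∫ x : ℝ, x * exp (-a * x ^ 2) * sinh (c * x)
      = c / (2 * a) * √(π / a) * exp (c ^ 2 / (4 * a)) := by
  have h : ∀ x : ℝ, x * exp (-a * x ^ 2) * sinh (c * x)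
      = (x * exp (-a * x ^ 2 + c * x) - x * exp (-a * x ^ 2 + -c * x)) / 2 := fun x ↦ by
    rw [sinh_eq, exp_add, exp_add, neg_mul c x]
    ring
  simp_rw [h]
  rw [integral_div, integral_sub (integrable_mul_exp_neg_mul_sq_add_mul ha c)
    (integrable_mul_exp_neg_mul_sq_add_mul ha (-c)), integral_mul_exp_neg_mul_sq_add_mul ha,
    integral_mul_exp_neg_mul_sq_add_mul ha, neg_sq]
  ring

theorem integral_Ioi_mul_exp_neg_mul_sq_mul_sinh {a : ℝ} (ha : 0 < a) (c : ℝ) :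
    ∫ x in Ioi 0, x * exp (-a * x ^ 2) * sinh (c * x)
      = c / (4 * a) * √(π / a) * exp (c ^ 2 / (4 * a)) := by
  rw [integral_Ioi_eq_half_of_even fun x ↦ by simp only [neg_sq, mul_neg, sinh_neg]; ring,
    integral_mul_exp_neg_mul_sq_mul_sinh ha]
  ring

theorem stmt16_general (lam μ t : ℝ) (ht : 0 < t) :
    1 / (2 * Real.sqrt Real.pi * t ^ ((3:ℝ)/2)) *
        ∫ ξ in Set.Ioi (0:ℝ), ξ * Real.exp (-ξ ^ 2 / (4 * t)) * (-μ * Real.sinh (lam * ξ))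
      = -lam * μ * Real.exp (lam ^ 2 * t) := by
  have h_exponent : ∀ ξ : ℝ, -ξ ^ 2 / (4 * t) = -(4 * t)⁻¹ * ξ ^ 2 := fun ξ ↦ by ring
  have h_sqrt : √(π / (4 * t)⁻¹) = 2 * √π * √t := by
    rw [div_inv_eq_mul, sqrt_mul pi_pos.le, sqrt_mul (by norm_num),
      show (4 : ℝ) = 2 ^ 2 by norm_num, sqrt_sq (by norm_num)]
    ring
  have h_rpow : t ^ ((3 : ℝ) / 2) = t * √t := by
    rw [show (3 : ℝ) / 2 = 1 + 1 / 2 by norm_num, rpow_add ht, rpow_one, sqrt_eq_rpow]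
  simp_rw [h_exponent, mul_comm (-μ), ← mul_assoc]
  rw [integral_mul_const, integral_Ioi_mul_exp_neg_mul_sq_mul_sinh (by positivity), h_sqrt,
    h_rpow]
  field_simp

theorem stmt16 (lam μ t : ℝ) (hlam : 0 < lam) (hμ : 0 < μ) (ht : 0 < t) :
    1 / (2 * Real.sqrt Real.pi * t ^ ((3:ℝ)/2)) *
        ∫ ξ in Set.Ioi (0:ℝ), ξ * Real.exp (-ξ ^ 2 / (4 * t)) * (-μ * Real.sinh (lam * ξ))
      = -lam * μ * Real.exp (lam ^ 2 * t) :=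
  stmt16_general lam μ t ht
end

section
/- For λ, μ > 0 and t > 0: (1/(2√π·t^{3/2}))·∫₀^∞ ξ·exp(−ξ²/(4t))·(−μ·sin(λξ))dξ = −λμ·exp(−λ²t). -/
open MeasureTheory Set Real

/-!
Integrating by parts against `d/dx exp (-a x²) = -2a x exp (-a x²)` turns the sine moment
`∫ x exp (-a x²) sin (b x)` into `b / (2a)` times the cosine transform of the Gaussian, which is
the real part of its Fourier transform `√(π/a) exp (-b²/(4a))`. The integrand is even, so its
integral over `(0, ∞)` is half of that over `ℝ`; at `a = 1/(4t)` the constants collapse to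
`-λμ exp (-λ²t)`.
-/

lemma integral_cos_mul_exp_neg_mul_sq {a : ℝ} (ha : 0 < a) (b : ℝ) :
    ∫ x : ℝ, cos (b * x) * exp (-a * x ^ 2) = √(π / a) * exp (-b ^ 2 / (4 * a)) := by
  have ha' : 0 < (a : ℂ).re := by simpa using ha
  have hint :
      Integrable fun x : ℝ ↦ Complex.exp (Complex.I * b * x) * Complex.exp (-a * x ^ 2) := by
    convert integrable_cexp_quadratic ha' (Complex.I * b) 0 using 2
    rw [← Complex.exp_add]; ring_nf
  have hre (x : ℝ) : cos (b * x) * exp (-a * x ^ 2)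
      = RCLike.re (Complex.exp (Complex.I * b * x) * Complex.exp (-a * x ^ 2)) := by
    rw [← Complex.exp_add, RCLike.re_to_complex, Complex.exp_re]
    simp [← Complex.ofReal_pow, mul_comm]
  have hsqrt : ((π / a : ℝ) : ℂ) ^ (1 / 2 : ℂ) = ((√(π / a) : ℝ) : ℂ) := by
    rw [sqrt_eq_rpow, Complex.ofReal_cpow (by positivity)]
    norm_num
  simp_rw [hre]
  rw [integral_re hint, fourierIntegral_gaussian ha', ← Complex.ofReal_div, hsqrt]
  norm_cast

lemma integral_mul_exp_neg_mul_sq_mul_sin {a : ℝ} (ha : 0 < a) (b : ℝ) :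
    ∫ x : ℝ, x * exp (-a * x ^ 2) * sin (b * x)
      = b / (2 * a) * ∫ x : ℝ, cos (b * x) * exp (-a * x ^ 2) := by
  have huv' : Integrable fun x : ℝ ↦ sin (b * x) * (-(2 * a) * (x * exp (-a * x ^ 2))) :=
    ((integrable_mul_exp_neg_mul_sq ha).const_mul _).bdd_mul (c := 1) (by fun_prop)
      (.of_forall fun x ↦ by simpa using abs_sin_le_one (b * x))
  have hu'v : Integrable fun x : ℝ ↦ b * cos (b * x) * exp (-a * x ^ 2) :=
    (integrable_exp_neg_mul_sq ha).bdd_mul (c := |b|) (by fun_prop)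
      (.of_forall fun x ↦ by simpa [abs_mul] using
        mul_le_of_le_one_right (abs_nonneg b) (abs_cos_le_one (b * x)))
  have huv : Integrable fun x : ℝ ↦ sin (b * x) * exp (-a * x ^ 2) :=
    (integrable_exp_neg_mul_sq ha).bdd_mul (c := 1) (by fun_prop)
      (.of_forall fun x ↦ by simpa using abs_sin_le_one (b * x))
  have hparts := integral_mul_deriv_eq_deriv_mul_of_integrable
    (u := fun x ↦ sin (b * x)) (u' := fun x ↦ b * cos (b * x))
    (v := fun x ↦ exp (-a * x ^ 2)) (v' := fun x ↦ -(2 * a) * (x * exp (-a * x ^ 2)))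
    (fun x _ ↦ by simpa [mul_comm] using ((hasDerivAt_id x).const_mul b).sin)
    (fun x _ ↦ (((hasDerivAt_pow 2 x).const_mul (-a)).exp).congr_deriv (by ring))
    huv' hu'v huv
  simp only [mul_left_comm _ (-(2 * a)), mul_assoc b, integral_const_mul] at hparts
  have hcomm : ∫ x : ℝ, x * exp (-a * x ^ 2) * sin (b * x)
      = ∫ x : ℝ, sin (b * x) * (x * exp (-a * x ^ 2)) := by
    congr 1 with x; ring
  rw [hcomm, div_mul_eq_mul_div, eq_div_iff (by positivity)]
  linarith

lemma integral_Ioi_mul_exp_neg_mul_sq_mul_sin {a : ℝ} (ha : 0 < a) (b : ℝ) :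
    ∫ x in Ioi (0 : ℝ), x * exp (-a * x ^ 2) * sin (b * x)
      = b / (4 * a) * √(π / a) * exp (-b ^ 2 / (4 * a)) := by
  have heven (x : ℝ) :
      |x| * exp (-a * |x| ^ 2) * sin (b * |x|) = x * exp (-a * x ^ 2) * sin (b * x) := by
    rcases abs_choice x with hx | hx <;> simp [hx]
  have h := integral_comp_abs (f := fun x ↦ x * exp (-a * x ^ 2) * sin (b * x))
  simp only [heven, integral_mul_exp_neg_mul_sq_mul_sin ha,
    integral_cos_mul_exp_neg_mul_sq ha] at h
  linear_combination -h / 2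

theorem stmt17_general (lam μ t : ℝ) (ht : 0 < t) :
    1 / (2 * Real.sqrt Real.pi * t ^ ((3:ℝ)/2)) *
        ∫ ξ in Set.Ioi (0:ℝ), ξ * Real.exp (-ξ ^ 2 / (4 * t)) * (-μ * Real.sin (lam * ξ))
      = -lam * μ * Real.exp (-lam ^ 2 * t) := by
  have ha : 0 < (4 * t)⁻¹ := by positivity
  have hintegrand (ξ : ℝ) : ξ * exp (-ξ ^ 2 / (4 * t)) * (-μ * sin (lam * ξ))
      = -μ * (ξ * exp (-(4 * t)⁻¹ * ξ ^ 2) * sin (lam * ξ)) := by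
    ring_nf
  have hpow : t ^ ((3 : ℝ) / 2) = t * √t := by
    rw [show (3 : ℝ) / 2 = 1 + 1 / 2 by norm_num, rpow_add ht, rpow_one, ← sqrt_eq_rpow]
  have hsqrt : √(π / (4 * t)⁻¹) = 2 * √π * √t := by
    rw [div_inv_eq_mul, show π * (4 * t) = 2 ^ 2 * π * t by ring, sqrt_mul (by positivity),
      sqrt_mul (by positivity), sqrt_sq zero_le_two]
  simp_rw [hintegrand]
  rw [integral_const_mul, integral_Ioi_mul_exp_neg_mul_sq_mul_sin ha, hpow, hsqrt]
  have : √t ≠ 0 := by positivity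
  field_simp

theorem stmt17 (lam μ t : ℝ) (hlam : 0 < lam) (hμ : 0 < μ) (ht : 0 < t) :
    1 / (2 * Real.sqrt Real.pi * t ^ ((3:ℝ)/2)) *
        ∫ ξ in Set.Ioi (0:ℝ), ξ * Real.exp (-ξ ^ 2 / (4 * t)) * (-μ * Real.sin (lam * ξ))
      = -lam * μ * Real.exp (-lam ^ 2 * t) :=
  stmt17_general lam μ t ht
end

section
/- For λ > 0, x ≥ 0, and 0 ≤ τ < t: ∫₀^∞ [K(x,t,ξ,τ) − K(−x,t,ξ,τ)]·sinh(λξ)dξ = exp(λ²(t−τ))·sinh(λx), where K(x,t,ξ,τ) = (1/(2√(π(t−τ))))·exp(−(x−ξ)²/(4(t−τ))). -/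
/-!
The heat kernel `K(y, t, ξ, τ)` is the density at `ξ` of the Gaussian law with mean `y` and
variance `2(t - τ)`, so integrating `e^{±λξ}` against it is the moment generating function
`e^{±λy + λ²(t-τ)}`; hence `∫_ℝ K(y, t, ξ, τ) sinh(λξ) dξ = e^{λ²(t-τ)} sinh(λy)`.
The integrand `(K(x, ·) - K(-x, ·)) sinh(λ ·)` is even, so its integral over `(0, ∞)` is half of
that over `ℝ`, which is `2 e^{λ²(t-τ)} sinh(λx)`.
-/

open MeasureTheory ProbabilityTheory Real Set
open scoped NNReal

lemma integral_Ioi_of_even {f : ℝ → ℝ} (hf : ∀ x, f (-x) = f x) :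
    ∫ x in Ioi 0, f x = (∫ x, f x) / 2 := by
  have hf_abs : (fun x => f |x|) = f := by
    funext x
    rcases abs_choice x with h | h <;> rw [h]
    exact hf x
  rw [← hf_abs, integral_comp_abs, hf_abs]
  ring

namespace ProbabilityTheory

variable {m : ℝ} {v : ℝ≥0}

lemma gaussianPDFReal_neg (m : ℝ) (v : ℝ≥0) (x : ℝ) :
    gaussianPDFReal m v (-x) = gaussianPDFReal (-m) v x := by
  rw [gaussianPDFReal, gaussianPDFReal, show -x - m = -(x - -m) by ring, neg_sq]

lemma integrable_gaussianPDFReal_mul_exp (hv : v ≠ 0) (c : ℝ) :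
    Integrable (fun x => gaussianPDFReal m v x * exp (c * x)) := by
  have h := integrable_exp_mul_gaussianReal (μ := m) (v := v) c
  rw [gaussianReal_of_var_ne_zero _ hv, integrable_withDensity_iff_integrable_smul'
    (measurable_gaussianPDF m v) (ae_of_all _ fun _ => gaussianPDF_lt_top)] at h
  simpa [ENNReal.toReal_ofReal (gaussianPDFReal_nonneg _ _ _)] using h

lemma integral_gaussianPDFReal_mul_exp (hv : v ≠ 0) (c : ℝ) :
    ∫ x, gaussianPDFReal m v x * exp (c * x) = exp (m * c + v * c ^ 2 / 2) := by
  rw [← congrFun mgf_id_gaussianReal c, mgf, integral_gaussianReal_eq_integral_smul hv]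
  rfl

lemma integrable_gaussianPDFReal_mul_sinh (hv : v ≠ 0) (c : ℝ) :
    Integrable (fun x => gaussianPDFReal m v x * sinh (c * x)) := by
  simp_rw [sinh_eq, ← neg_mul, mul_div_assoc', mul_sub]
  exact ((integrable_gaussianPDFReal_mul_exp hv c).sub
    (integrable_gaussianPDFReal_mul_exp hv (-c))).div_const 2

lemma integral_gaussianPDFReal_mul_sinh (hv : v ≠ 0) (c : ℝ) :
    ∫ x, gaussianPDFReal m v x * sinh (c * x) = exp (v * c ^ 2 / 2) * sinh (m * c) := by
  simp_rw [sinh_eq, ← neg_mul, mul_div_assoc', mul_sub]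
  rw [integral_div, integral_sub (integrable_gaussianPDFReal_mul_exp hv c)
    (integrable_gaussianPDFReal_mul_exp hv (-c)), integral_gaussianPDFReal_mul_exp hv,
    integral_gaussianPDFReal_mul_exp hv, exp_add, exp_add, neg_sq, mul_neg, ← neg_mul]
  ring

lemma integral_Ioi_gaussianPDFReal_sub_reflect_mul_sinh (hv : v ≠ 0) (x c : ℝ) :
    ∫ ξ in Ioi 0, (gaussianPDFReal x v ξ - gaussianPDFReal (-x) v ξ) * sinh (c * ξ)
      = exp (v * c ^ 2 / 2) * sinh (c * x) := by
  have h_even : ∀ ξ, (gaussianPDFReal x v (-ξ) - gaussianPDFReal (-x) v (-ξ)) * sinh (c * -ξ)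
      = (gaussianPDFReal x v ξ - gaussianPDFReal (-x) v ξ) * sinh (c * ξ) := by
    intro ξ
    rw [gaussianPDFReal_neg, gaussianPDFReal_neg, neg_neg, mul_neg, sinh_neg]
    ring
  rw [integral_Ioi_of_even h_even]
  simp_rw [sub_mul]
  rw [integral_sub (integrable_gaussianPDFReal_mul_sinh hv c)
    (integrable_gaussianPDFReal_mul_sinh hv c), integral_gaussianPDFReal_mul_sinh hv,
    integral_gaussianPDFReal_mul_sinh hv, neg_mul, sinh_neg, mul_comm x]
  ring

end ProbabilityTheory

lemma heatKernel_eq_gaussianPDFReal {s : ℝ} (hs : 0 < s) (y ξ : ℝ) :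
    1 / (2 * √(π * s)) * exp (-(y - ξ) ^ 2 / (4 * s))
      = gaussianPDFReal y (2 * s).toNNReal ξ := by
  have h_sqrt : √(2 * π * (2 * s)) = 2 * √(π * s) := by
    rw [show 2 * π * (2 * s) = 2 ^ 2 * (π * s) by ring, sqrt_mul (by positivity),
      sqrt_sq zero_le_two]
  rw [gaussianPDFReal, coe_toNNReal _ (by positivity), h_sqrt, one_div]
  congr 2
  ring

theorem stmt18_general (lam x t τ : ℝ) (hτt : τ < t)
    (K : ℝ → ℝ → ℝ → ℝ → ℝ)
    (hK : ∀ y s ξ r : ℝ, K y s ξ r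
        = 1 / (2 * Real.sqrt (Real.pi * (s - r))) * Real.exp (-(y - ξ) ^ 2 / (4 * (s - r)))) :
    ∫ ξ in Set.Ioi (0:ℝ), (K x t ξ τ - K (-x) t ξ τ) * Real.sinh (lam * ξ)
      = Real.exp (lam ^ 2 * (t - τ)) * Real.sinh (lam * x) := by
  have hs : 0 < t - τ := sub_pos.mpr hτt
  have hv : (2 * (t - τ)).toNNReal ≠ 0 := by simpa using hs
  simp_rw [hK, heatKernel_eq_gaussianPDFReal hs]
  rw [integral_Ioi_gaussianPDFReal_sub_reflect_mul_sinh hv, coe_toNNReal _ (by positivity)]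
  congr 2
  ring

theorem stmt18 (lam x t τ : ℝ) (hlam : 0 < lam) (hx : 0 ≤ x)
    (hτ : 0 ≤ τ) (hτt : τ < t)
    (K : ℝ → ℝ → ℝ → ℝ → ℝ)
    (hK : ∀ y s ξ r : ℝ, K y s ξ r
        = 1 / (2 * Real.sqrt (Real.pi * (s - r))) * Real.exp (-(y - ξ) ^ 2 / (4 * (s - r)))) :
    ∫ ξ in Set.Ioi (0:ℝ), (K x t ξ τ - K (-x) t ξ τ) * Real.sinh (lam * ξ)
      = Real.exp (lam ^ 2 * (t - τ)) * Real.sinh (lam * x) :=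
  stmt18_general lam x t τ hτt K hK
end
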